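/- Let L be an invertible matrix differential operator with causal Green's matrix G_L (the unique causal matrix distribution with L{G_L} = I·δ). Then the time-reversed transpose G_L^{⊤,∨}(·) = G_L^⊤(−·) is an anti-causal Green's matrix of the adjoint operator L*, i.e., L*{G_L^{⊤,∨}} = I·δ, and G_L^{⊤,∨} is supported in (−∞, 0]. -/

import Mathlib

open MeasureTheory SchwartzMap Polynomial

noncomputable section

/-- Tempered distributions on `ℝ`. -/
abbrev TD : Type := SchwartzMap ℝ ℝ →L[ℝ] ℝ

/-- Distributional derivative. -/
def Dop : Module.End ℝ TD where
  toFun T := -(T.comp (SchwartzMap.derivCLM ℝ ℝ))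
  map_add' T S := by ext φ; simp [neg_add]; ring
  map_smul' c T := by ext φ; simp

/-- Action of an ordinary differential operator (a polynomial in `D`) on a distribution. -/
def odo (p : Polynomial ℝ) : Module.End ℝ TD := Polynomial.aeval Dop p

/-- Dirac delta distribution at `0`. -/
def diracTD : TD :=
  (BoundedContinuousFunction.evalCLM ℝ (0 : ℝ)).comp (toBoundedContinuousFunctionCLM ℝ ℝ ℝ)

/-- Action of a matrix differential operator on a vector-valued distribution. -/
def mdoLM {D : ℕ} (L : Matrix (Fin D) (Fin D) (Polynomial ℝ)) :
    (Fin D → TD) →ₗ[ℝ] (Fin D → TD) where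
  toFun f r := ∑ c, odo (L r c) (f c)
  map_add' f g := by funext r; simp [Finset.sum_add_distrib]
  map_smul' c f := by funext r; simp [Finset.smul_sum]

/-- Action of a matrix differential operator on a matrix-valued distribution. -/
def mdoMat {D : ℕ} (L : Matrix (Fin D) (Fin D) (Polynomial ℝ))
    (G : Matrix (Fin D) (Fin D) TD) : Matrix (Fin D) (Fin D) TD :=
  Matrix.of fun r c => ∑ d, odo (L r d) (G d c)

/-- The identity matrix times the Dirac delta. -/
def idDelta (D : ℕ) : Matrix (Fin D) (Fin D) TD :=
  Matrix.of fun r c => if r = c then diracTD else 0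

/-- A distribution is causal if it vanishes on test functions supported in `(-∞, 0)`. -/
def IsCausalTD (T : TD) : Prop := ∀ φ : SchwartzMap ℝ ℝ, tsupport ⇑φ ⊆ Set.Iio 0 → T φ = 0

/-- A distribution is anti-causal if it vanishes on test functions supported in `(0, ∞)`. -/
def IsAntiCausalTD (T : TD) : Prop := ∀ φ : SchwartzMap ℝ ℝ, tsupport ⇑φ ⊆ Set.Ioi 0 → T φ = 0

/-- Time reversal of a distribution. -/
def revTD (T : TD) : TD :=
  T.comp (SchwartzMap.compCLMOfContinuousLinearEquiv ℝ (ContinuousLinearEquiv.neg ℝ))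

/-- Adjoint of a matrix differential operator: transpose and `D ↦ -D`. -/
def mdoAdj {D : ℕ} (L : Matrix (Fin D) (Fin D) (Polynomial ℝ)) :
    Matrix (Fin D) (Fin D) (Polynomial ℝ) :=
  Matrix.of fun r c => (L c r).comp (-Polynomial.X)
/-- The time-reversed transpose of a matrix-valued distribution. -/
def revTranspose {D : ℕ} (G : Matrix (Fin D) (Fin D) TD) : Matrix (Fin D) (Fin D) TD :=
  Matrix.of fun r c => revTD (G c r)

/-!
Entrywise, `L*{G^{⊤,∨}}` is the time reversal of `Lᵀ{Gᵀ} = (G L)ᵀ`, so it suffices that a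
causal left inverse `G` of `L` is also a right inverse. Multiplying `L G = I δ` by the adjugate
gives `det L (D) G = adj L δ`, hence `det L (D) (G L - I δ) = 0`, and a causal tempered
distribution `T` with `p(D) T = 0`, `p ≠ 0`, vanishes. The latter holds by duality, because every
Schwartz function is `p(-d/dt) φ` plus a function supported in `(-∞, 0)`. Factoring `p` over `ℂ`
reduces this to solving `φ' + a φ = ψ - χ`: take `φ(t) = ∫_{-∞}^t e^{-a(t-s)} ψ(s) ds` when
`Re a ≥ 0` (for `Re a = 0` a bump `χ` first kills the moment `∫ e^{as} ψ(s) ds`, which is what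
obstructs decay at `+∞`), and reflect `t ↦ -t` when `Re a < 0`.
-/

open Set
open scoped Complex ContDiff Matrix

theorem LinearMap.aeval_comp_eq_comp_aeval {R M N : Type*} [CommSemiring R] [AddCommMonoid M]
    [Module R M] [AddCommMonoid N] [Module R N] {f : M →ₗ[R] N} {g : Module.End R M}
    {g₂ : Module.End R N} (h : g₂ ∘ₗ f = f ∘ₗ g) (p : R[X]) :
    aeval g₂ p ∘ₗ f = f ∘ₗ aeval g p := by
  induction p using Polynomial.induction_on' with
  | add p q hp hq => simp only [map_add, LinearMap.add_comp, LinearMap.comp_add, hp, hq]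
  | monomial n r =>
    simp only [aeval_monomial, Algebra.algebraMap_eq_smul_one, smul_mul_assoc, one_mul,
      LinearMap.smul_comp, LinearMap.comp_smul, Module.End.commute_pow_left_of_commute h n]

namespace SchwartzMap

variable {𝕜 E F : Type*} [RCLike 𝕜] [NormedAddCommGroup E] [NormedSpace ℝ E]
  [NormedAddCommGroup F] [NormedSpace ℝ F] [NormedSpace 𝕜 F]

theorem tsupport_aeval_apply_subset {A : 𝓢(E, F) →L[𝕜] 𝓢(E, F)}
    (hA : ∀ φ, tsupport (A φ) ⊆ tsupport φ) (P : 𝕜[X]) (φ : 𝓢(E, F)) :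
    tsupport (aeval A P φ) ⊆ tsupport φ := by
  induction P using Polynomial.induction_on generalizing φ with
  | C c =>
    rw [aeval_C, ContinuousLinearMap.algebraMap_apply]
    exact tsupport_smul_subset_right (fun _ => c) φ
  | add P Q hP hQ =>
    rw [map_add, add_apply]
    exact (tsupport_add _ _).trans (union_subset (hP φ) (hQ φ))
  | monomial n c ih =>
    rw [pow_succ, ← mul_assoc, map_mul, aeval_X, mul_apply_eq_comp]
    exact (ih (A φ)).trans (hA φ)

theorem tsupport_neg_derivCLM_subset (φ : 𝓢(ℝ, F)) :
    tsupport ((-derivCLM 𝕜 F) φ) ⊆ tsupport φ :=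
  (tsupport_neg (derivCLM 𝕜 F φ : ℝ → F)).le.trans (tsupport_derivCLM_subset 𝕜 φ)

theorem derivCLM_compCLMOfContinuousLinearEquiv_neg (φ : 𝓢(ℝ, F)) :
    derivCLM 𝕜 F (compCLMOfContinuousLinearEquiv 𝕜 (.neg ℝ) φ) =
      -compCLMOfContinuousLinearEquiv 𝕜 (.neg ℝ) (derivCLM 𝕜 F φ) := by
  ext t
  simp [Function.comp_def, deriv_comp_neg]

theorem postcompCLM_derivCLM {G : Type*} [NormedAddCommGroup G] [NormedSpace ℝ G]
    (g : F →L[ℝ] G) (φ : 𝓢(ℝ, F)) :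
    postcompCLM g (derivCLM 𝕜 F φ) = derivCLM ℝ G (postcompCLM g φ) := by
  ext t
  simp only [postcompCLM_apply, derivCLM_apply]
  exact (g.hasFDerivAt.comp_hasDerivAt t φ.differentiableAt.hasDerivAt).deriv.symm

end SchwartzMap

theorem norm_cexp_mul_ofReal (a : ℂ) (s : ℝ) : ‖cexp (a * s)‖ = Real.exp (a.re * s) := by
  simp [Complex.norm_exp]

section CausalSolution

variable {a : ℂ}

theorem integrableOn_cexp_mul_Iic (ha : 0 ≤ a.re) (ψ : 𝓢(ℝ, ℂ)) (t : ℝ) :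
    IntegrableOn (fun s : ℝ => cexp (a * s) * ψ s) (Iic t) := by
  refine ((ψ.integrable (μ := volume)).norm.const_mul (Real.exp (a.re * t))).integrableOn.mono'
    (Continuous.aestronglyMeasurable (by fun_prop)) ?_
  refine (ae_restrict_iff' measurableSet_Iic).2 (.of_forall fun s hs => ?_)
  rw [norm_mul, norm_cexp_mul_ofReal]
  gcongr
  exact hs

theorem integrable_cexp_mul_of_re_eq_zero (ha : a.re = 0) (ψ : 𝓢(ℝ, ℂ)) :
    Integrable fun s : ℝ => cexp (a * s) * ψ s :=
  (ψ.integrable (μ := volume)).norm.mono' (Continuous.aestronglyMeasurable (by fun_prop))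
    (.of_forall fun s => by simp [norm_cexp_mul_ofReal, ha])

theorem pow_mul_exp_neg_mul_le {α u : ℝ} (hα : 0 < α) (hu : 0 ≤ u) (k : ℕ) :
    u ^ k * Real.exp (-(α * u)) ≤ k.factorial / α ^ k := by
  have h := Real.pow_div_factorial_le_exp _ (mul_nonneg hα.le hu) k
  rw [div_le_iff₀ (by positivity), mul_pow] at h
  rw [le_div_iff₀ (by positivity), Real.exp_neg]
  calc u ^ k * (Real.exp (α * u))⁻¹ * α ^ k = α ^ k * u ^ k * (Real.exp (α * u))⁻¹ := by ring
    _ ≤ Real.exp (α * u) * k.factorial * (Real.exp (α * u))⁻¹ := by gcongr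
    _ = k.factorial := by field_simp

theorem norm_pow_mul_exp_mul_sub_le {α s t : ℝ} (hα : 0 < α) (hst : s ≤ t) (k : ℕ) :
    ‖t‖ ^ k * Real.exp (α * (s - t)) ≤ 2 ^ (k - 1) * (k.factorial / α ^ k + ‖s‖ ^ k) := by
  have hts : 0 ≤ t - s := sub_nonneg.2 hst
  have hexp : Real.exp (α * (s - t)) = Real.exp (-(α * (t - s))) := by ring_nf
  have hnorm : ‖t‖ ≤ (t - s) + ‖s‖ := by
    simpa [Real.norm_eq_abs, abs_of_nonneg hts] using norm_add_le (t - s) s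
  calc ‖t‖ ^ k * Real.exp (α * (s - t))
      ≤ 2 ^ (k - 1) * ((t - s) ^ k + ‖s‖ ^ k) * Real.exp (-(α * (t - s))) := by
        rw [hexp]
        gcongr
        exact (pow_le_pow_left₀ (norm_nonneg t) hnorm k).trans (add_pow_le hts (norm_nonneg s) k)
    _ = 2 ^ (k - 1) * ((t - s) ^ k * Real.exp (-(α * (t - s))) +
          ‖s‖ ^ k * Real.exp (-(α * (t - s)))) := by ring
    _ ≤ 2 ^ (k - 1) * (k.factorial / α ^ k + ‖s‖ ^ k * 1) := by
        gcongr
        · exact pow_mul_exp_neg_mul_le hα hts k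
        · exact Real.exp_le_one_iff.2 (neg_nonpos.2 (mul_nonneg hα.le hts))
    _ = 2 ^ (k - 1) * (k.factorial / α ^ k + ‖s‖ ^ k) := by rw [mul_one]

def causalSolution (a : ℂ) (ψ : 𝓢(ℝ, ℂ)) (t : ℝ) : ℂ :=
  cexp (-a * t) * ∫ s in Iic t, cexp (a * s) * ψ s

theorem hasDerivAt_causalSolution (ha : 0 ≤ a.re) (ψ : 𝓢(ℝ, ℂ)) (t : ℝ) :
    HasDerivAt (causalSolution a ψ) (ψ t - a * causalSolution a ψ t) t := by
  set g : ℝ → ℂ := fun s => cexp (a * s) * ψ s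
  have hg : Continuous g := by fun_prop
  have hF : (fun t => ∫ s in Iic t, g s) =
      fun t => (∫ s in Iic 0, g s) + ∫ s in (0 : ℝ)..t, g s := by
    funext t
    rw [← intervalIntegral.integral_Iic_sub_Iic (integrableOn_cexp_mul_Iic ha ψ 0)
      (integrableOn_cexp_mul_Iic ha ψ t), add_sub_cancel]
  have hFd : HasDerivAt (fun t => ∫ s in Iic t, g s) (g t) t := by
    rw [hF]
    exact (intervalIntegral.integral_hasDerivAt_right (hg.intervalIntegrable _ _)
      hg.stronglyMeasurable.stronglyMeasurableAtFilter hg.continuousAt).const_add _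
  have he : HasDerivAt (fun t : ℝ => cexp (-a * t)) (cexp (-a * t) * (-a * 1)) t :=
    ((hasDerivAt_id t).ofReal_comp.const_mul (-a)).cexp
  have hinv : cexp (-a * t) * cexp (a * t) = 1 := by
    rw [← Complex.exp_add, neg_mul, neg_add_cancel, Complex.exp_zero]
  refine (he.mul hFd).congr_deriv ?_
  rw [causalSolution]
  linear_combination (ψ t) * hinv

theorem pow_mul_norm_cexp_mul_setIntegral_le (ψ : 𝓢(ℝ, ℂ)) {I : Set ℝ} (hI : MeasurableSet I)
    {t : ℝ} {k : ℕ} {W : ℝ → ℝ} (hW0 : ∀ s, 0 ≤ W s) (hW : Integrable W)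
    (hWI : ∀ s ∈ I, ‖t‖ ^ k * Real.exp (a.re * (s - t)) * ‖ψ s‖ ≤ W s) :
    ‖t‖ ^ k * ‖cexp (-a * t) * ∫ s in I, cexp (a * s) * ψ s‖ ≤ ∫ s, W s := by
  calc ‖t‖ ^ k * ‖cexp (-a * t) * ∫ s in I, cexp (a * s) * ψ s‖
      ≤ ‖t‖ ^ k * (Real.exp (-a.re * t) * ∫ s in I, Real.exp (a.re * s) * ‖ψ s‖) := by
        rw [norm_mul, norm_cexp_mul_ofReal, Complex.neg_re]
        gcongr
        refine (norm_integral_le_integral_norm _).trans_eq ?_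
        simp_rw [norm_mul, norm_cexp_mul_ofReal]
    _ = ∫ s in I, ‖t‖ ^ k * Real.exp (a.re * (s - t)) * ‖ψ s‖ := by
        rw [← integral_const_mul, ← integral_const_mul]
        congr 1 with s
        rw [mul_sub, Real.exp_sub, div_eq_mul_inv, ← Real.exp_neg]
        ring_nf
    _ ≤ ∫ s in I, W s :=
        integral_mono_of_nonneg (.of_forall fun s => by positivity) hW.integrableOn
          ((ae_restrict_iff' hI).2 (.of_forall hWI))
    _ ≤ ∫ s, W s := setIntegral_le_integral hW (.of_forall hW0)

theorem exists_pow_mul_norm_causalSolution_le (ha : 0 ≤ a.re) (ψ : 𝓢(ℝ, ℂ))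
    (hmom : a.re = 0 → ∫ s : ℝ, cexp (a * s) * ψ s = 0) (k : ℕ) :
    ∃ C, ∀ t, ‖t‖ ^ k * ‖causalSolution a ψ t‖ ≤ C := by
  have hψ : Integrable fun s => ‖ψ s‖ := (ψ.integrable (μ := volume)).norm
  have hψk : Integrable fun s => ‖s‖ ^ k * ‖ψ s‖ := ψ.integrable_pow_mul volume k
  rcases ha.lt_or_eq with hpos | hzero
  · refine ⟨∫ s, 2 ^ (k - 1) * (k.factorial / a.re ^ k * ‖ψ s‖ + ‖s‖ ^ k * ‖ψ s‖), fun t => ?_⟩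
    refine pow_mul_norm_cexp_mul_setIntegral_le ψ measurableSet_Iic (fun s => by positivity) ?_
      fun s (hs : s ≤ t) => ?_
    · exact ((hψ.const_mul _).add hψk).const_mul _
    · calc ‖t‖ ^ k * Real.exp (a.re * (s - t)) * ‖ψ s‖
          ≤ 2 ^ (k - 1) * (k.factorial / a.re ^ k + ‖s‖ ^ k) * ‖ψ s‖ :=
            mul_le_mul_of_nonneg_right (norm_pow_mul_exp_mul_sub_le hpos hs k) (norm_nonneg _)
        _ = _ := by ring
  · have h0 : a.re = 0 := hzero.symm
    refine ⟨∫ s, ‖s‖ ^ k * ‖ψ s‖, fun t => ?_⟩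
    rcases le_total t 0 with ht | ht
    · refine pow_mul_norm_cexp_mul_setIntegral_le ψ measurableSet_Iic (fun s => by positivity) hψk
        fun s (hs : s ≤ t) => ?_
      have hts : ‖t‖ ≤ ‖s‖ := by simpa only [Real.norm_eq_abs] using abs_le_abs_of_nonpos ht hs
      rw [h0, zero_mul, Real.exp_zero, mul_one]
      gcongr
    · -- the vanishing moment turns the integral over `Iic t` into minus the one over `Ioi t`
      have hsplit := intervalIntegral.integral_Iic_add_Ioi (μ := volume) (b := t)
        (integrableOn_cexp_mul_Iic ha ψ t) (integrable_cexp_mul_of_re_eq_zero h0 ψ).integrableOn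
      rw [hmom h0, add_eq_zero_iff_eq_neg] at hsplit
      rw [causalSolution, hsplit, mul_neg, norm_neg]
      refine pow_mul_norm_cexp_mul_setIntegral_le ψ measurableSet_Ioi (fun s => by positivity) hψk
        fun s (hs : t < s) => ?_
      have hts : ‖t‖ ≤ ‖s‖ := by simpa only [Real.norm_eq_abs] using abs_le_abs_of_nonneg ht hs.le
      rw [h0, zero_mul, Real.exp_zero, mul_one]
      gcongr

theorem exists_schwartzMap_eq_of_hasDerivAt {ψ : 𝓢(ℝ, ℂ)} {f : ℝ → ℂ}
    (hf : ∀ t, HasDerivAt f (ψ t - a * f t) t) (hdecay : ∀ k : ℕ, ∃ C, ∀ t, ‖t‖ ^ k * ‖f t‖ ≤ C) :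
    ∃ φ : 𝓢(ℝ, ℂ), ⇑φ = f := by
  have hdiff : Differentiable ℝ f := fun t => (hf t).differentiableAt
  have hderiv : deriv f = fun t => ψ t - a * f t := funext fun t => (hf t).deriv
  have hsmooth (n : ℕ) : ContDiff ℝ n f := by
    induction n with
    | zero => exact contDiff_zero.2 hdiff.continuous
    | succ n ih =>
      rw [Nat.cast_succ]
      refine contDiff_succ_iff_deriv.2 ⟨hdiff, by simp, ?_⟩
      rw [hderiv]
      exact (ψ.smooth n).sub (contDiff_const.mul ih)
  have hiter (n : ℕ) (t : ℝ) :
      iteratedDeriv (n + 1) f t = iteratedDeriv n ψ t - a * iteratedDeriv n f t := by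
    rw [iteratedDeriv_succ', hderiv, iteratedDeriv_fun_sub (ψ.smooth n).contDiffAt
      (contDiff_const.mul (hsmooth n)).contDiffAt, iteratedDeriv_const_mul _ (hsmooth n).contDiffAt]
  have hdecay' (n k : ℕ) : ∃ C, ∀ t, ‖t‖ ^ k * ‖iteratedDeriv n f t‖ ≤ C := by
    induction n generalizing k with
    | zero => simpa using hdecay k
    | succ n ih =>
      obtain ⟨C₁, -, hC₁⟩ := ψ.decay k n
      obtain ⟨C₂, hC₂⟩ := ih k
      refine ⟨C₁ + ‖a‖ * C₂, fun t => ?_⟩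
      calc ‖t‖ ^ k * ‖iteratedDeriv (n + 1) f t‖
          ≤ ‖t‖ ^ k * (‖iteratedDeriv n ψ t‖ + ‖a‖ * ‖iteratedDeriv n f t‖) := by
            rw [hiter, ← norm_mul]
            gcongr
            exact norm_sub_le _ _
        _ = ‖t‖ ^ k * ‖iteratedFDeriv ℝ n ψ t‖ + ‖a‖ * (‖t‖ ^ k * ‖iteratedDeriv n f t‖) := by
            rw [norm_iteratedFDeriv_eq_norm_iteratedDeriv]
            ring
        _ ≤ C₁ + ‖a‖ * C₂ := by
            gcongr
            exacts [hC₁ t, hC₂ t]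
  exact ⟨⟨f, contDiff_infty.2 hsmooth, fun k n => (hdecay' n k).imp fun C hC t => by
    rw [norm_iteratedFDeriv_eq_norm_iteratedDeriv]; exact hC t⟩, rfl⟩

theorem exists_derivCLM_add_smul_eq_of_nonneg_re (ha : 0 ≤ a.re) (ψ : 𝓢(ℝ, ℂ))
    (hmom : a.re = 0 → ∫ s : ℝ, cexp (a * s) * ψ s = 0) :
    ∃ φ : 𝓢(ℝ, ℂ), derivCLM ℂ ℂ φ + a • φ = ψ := by
  obtain ⟨φ, hφ⟩ := exists_schwartzMap_eq_of_hasDerivAt (hasDerivAt_causalSolution ha ψ)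
    (exists_pow_mul_norm_causalSolution_le ha ψ hmom)
  refine ⟨φ, ext fun t => ?_⟩
  simp [hφ, (hasDerivAt_causalSolution ha ψ t).deriv]

theorem exists_derivCLM_add_smul_eq_of_re_ne_zero (ha : a.re ≠ 0) (ψ : 𝓢(ℝ, ℂ)) :
    ∃ φ : 𝓢(ℝ, ℂ), derivCLM ℂ ℂ φ + a • φ = ψ := by
  rcases ha.lt_or_gt with hneg | hpos
  · let R := compCLMOfContinuousLinearEquiv ℂ (F := ℂ) (ContinuousLinearEquiv.neg ℝ : ℝ ≃L[ℝ] ℝ)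
    obtain ⟨χ, hχ⟩ := exists_derivCLM_add_smul_eq_of_nonneg_re (a := -a)
      (by rw [Complex.neg_re]; linarith) (R ψ) fun h => absurd (by simpa using h) hneg.ne
    refine ⟨-R χ, ext fun t => ?_⟩
    simpa [R, derivCLM_compCLMOfContinuousLinearEquiv_neg] using congrArg (· (-t)) hχ
  · exact exists_derivCLM_add_smul_eq_of_nonneg_re hpos.le ψ fun h => absurd h hpos.ne'

end CausalSolution

theorem exists_tsupport_subset_Iio_integral_cexp_mul_eq_one (a : ℂ) :
    ∃ ψ₀ : 𝓢(ℝ, ℂ), tsupport ψ₀ ⊆ Iio 0 ∧ ∫ s : ℝ, cexp (a * s) * ψ₀ s = 1 := by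
  let u : ContDiffBump (-2 : ℝ) := ⟨1 / 2, 1, by norm_num, by norm_num⟩
  let f : ℝ → ℂ := fun s => cexp (-(a * s)) * (u.normed volume s : ℂ)
  have hu : tsupport (fun s => (u.normed volume s : ℂ)) ⊆ Iio 0 := by
    refine (tsupport_comp_subset Complex.ofReal_zero _).trans ?_
    rw [u.tsupport_normed_eq, Real.closedBall_eq_Icc]
    intro s hs
    simp only [mem_Icc, u] at hs
    simp only [mem_Iio]
    linarith [hs.2]
  have hcompact : HasCompactSupport f :=
    (u.hasCompactSupport_normed.comp_left Complex.ofReal_zero).mul_left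
  have hsmooth : ContDiff ℝ ∞ f :=
    (Complex.contDiff_exp.comp (contDiff_const.mul Complex.ofRealCLM.contDiff).neg).mul
      (Complex.ofRealCLM.contDiff.comp u.contDiff_normed)
  refine ⟨hcompact.toSchwartzMap hsmooth, tsupport_mul_subset_right.trans hu, ?_⟩
  have hcancel (s : ℝ) : cexp (a * s) * f s = (u.normed volume s : ℂ) := by
    rw [← mul_assoc, ← Complex.exp_add, add_neg_cancel, Complex.exp_zero, one_mul]
  simp only [HasCompactSupport.toSchwartzMap_toFun, hcancel]
  rw [integral_complex_ofReal, u.integral_normed, Complex.ofReal_one]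

theorem exists_eq_derivCLM_add_smul_add (a : ℂ) (ψ : 𝓢(ℝ, ℂ)) :
    ∃ φ χ : 𝓢(ℝ, ℂ), tsupport χ ⊆ Iio 0 ∧ ψ = derivCLM ℂ ℂ φ + a • φ + χ := by
  by_cases ha : a.re = 0
  · obtain ⟨ψ₀, hψ₀, hmom₀⟩ := exists_tsupport_subset_Iio_integral_cexp_mul_eq_one a
    let c := ∫ s : ℝ, cexp (a * s) * ψ s
    have hmom : ∫ s : ℝ, cexp (a * s) * (ψ - c • ψ₀) s = 0 := by
      have h (s : ℝ) : cexp (a * s) * (ψ - c • ψ₀) s =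
          cexp (a * s) * ψ s - c * (cexp (a * s) * ψ₀ s) := by
        simp only [sub_apply, smul_apply, smul_eq_mul]
        ring
      simp only [h]
      rw [integral_sub (integrable_cexp_mul_of_re_eq_zero ha ψ)
        ((integrable_cexp_mul_of_re_eq_zero ha ψ₀).const_mul c), integral_const_mul, hmom₀,
        mul_one, sub_self]
    obtain ⟨φ, hφ⟩ := exists_derivCLM_add_smul_eq_of_nonneg_re ha.ge (ψ - c • ψ₀) fun _ => hmom
    exact ⟨φ, c • ψ₀, (tsupport_smul_subset_right (fun _ => c) ψ₀).trans hψ₀,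
      by rw [hφ, sub_add_cancel]⟩
  · obtain ⟨φ, hφ⟩ := exists_derivCLM_add_smul_eq_of_re_ne_zero ha ψ
    exact ⟨φ, 0, by simp, by rw [hφ, add_zero]⟩

theorem exists_eq_aeval_derivCLM_add {P : ℂ[X]} (hP : P ≠ 0) (ψ : 𝓢(ℝ, ℂ)) :
    ∃ φ χ : 𝓢(ℝ, ℂ), tsupport χ ⊆ Iio 0 ∧ ψ = aeval (-derivCLM ℂ ℂ) P φ + χ := by
  suffices ∀ (s : Multiset ℂ) (c : ℂ), c ≠ 0 → ∀ ψ : 𝓢(ℝ, ℂ), ∃ φ χ : 𝓢(ℝ, ℂ),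
      tsupport χ ⊆ Iio 0 ∧ ψ = aeval (-derivCLM ℂ ℂ) (C c * (s.map fun b => X - C b).prod) φ + χ by
    rw [← C_leadingCoeff_mul_prod_multiset_X_sub_C (p := P) IsAlgClosed.card_roots_eq_natDegree]
    exact this _ _ (leadingCoeff_ne_zero.2 hP) ψ
  intro s
  induction s using Multiset.induction_on with
  | empty => exact fun c hc ψ => ⟨c⁻¹ • ψ, 0, by simp, by simp [smul_smul, hc]⟩
  | cons b s ih =>
    intro c hc ψ
    obtain ⟨φ₁, χ₁, h₁, rfl⟩ := exists_eq_derivCLM_add_smul_add b ψ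
    obtain ⟨φ₂, χ₂, h₂, hφ₁⟩ := ih c hc (-φ₁)
    refine ⟨φ₂, aeval (-derivCLM ℂ ℂ) (X - C b) χ₂ + χ₁, ?_, ?_⟩
    · exact (tsupport_add _ _).trans (union_subset
        ((tsupport_aeval_apply_subset tsupport_neg_derivCLM_subset _ _).trans h₂) h₁)
    · rw [Multiset.map_cons, Multiset.prod_cons, mul_left_comm, map_mul, mul_apply_eq_comp,
        ← add_assoc, ← map_add, ← hφ₁]
      simp [sub_eq_add_neg]

theorem postcompCLM_reCLM_aeval (p : ℝ[X]) (ξ : 𝓢(ℝ, ℂ)) :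
    postcompCLM Complex.reCLM (aeval (-derivCLM ℂ ℂ) (p.map (algebraMap ℝ ℂ)) ξ) =
      aeval (-derivCLM ℝ ℝ) p (postcompCLM Complex.reCLM ξ) := by
  induction p using Polynomial.induction_on generalizing ξ with
  | C c => ext t; simp
  | add p q hp hq => simp only [Polynomial.map_add, map_add, add_apply, hp, hq]
  | monomial n c ih =>
    rw [pow_succ, ← mul_assoc, Polynomial.map_mul, Polynomial.map_X, map_mul, map_mul, aeval_X,
      aeval_X, mul_apply_eq_comp, mul_apply_eq_comp, ih, neg_apply, neg_apply, map_neg,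
      postcompCLM_derivCLM]

theorem Dop_apply (T : TD) : Dop T = T.comp (-derivCLM ℝ ℝ) := by
  rw [ContinuousLinearMap.comp_neg]
  rfl

theorem odo_add (p q : ℝ[X]) : odo (p + q) = odo p + odo q := map_add _ p q

theorem odo_mul (p q : ℝ[X]) : odo (p * q) = odo p * odo q := map_mul _ p q

theorem odo_eq_comp_aeval (p : ℝ[X]) (T : TD) : odo p T = T.comp (aeval (-derivCLM ℝ ℝ) p) := by
  induction p using Polynomial.induction_on generalizing T with
  | C c => ext φ; simp [odo]
  | add p q hp hq =>
    rw [odo_add, LinearMap.add_apply, hp, hq, map_add, ContinuousLinearMap.comp_add]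
  | monomial n c ih =>
    rw [pow_succ, ← mul_assoc, odo_mul, Module.End.mul_apply, ih, odo, aeval_X, Dop_apply,
      ContinuousLinearMap.comp_assoc, mul_comm _ X, map_mul (aeval _) X, aeval_X]
    rfl

def causalTD : Submodule ℝ TD where
  carrier := {T | IsCausalTD T}
  add_mem' hT hS φ hφ := by simp [hT φ hφ, hS φ hφ]
  zero_mem' _ _ := rfl
  smul_mem' c T hT φ hφ := by simp [hT φ hφ]

theorem isCausalTD_odo (p : ℝ[X]) {T : TD} (hT : IsCausalTD T) : IsCausalTD (odo p T) := by
  intro φ hφ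
  rw [odo_eq_comp_aeval]
  exact hT _ ((tsupport_aeval_apply_subset (tsupport_neg_derivCLM_subset (𝕜 := ℝ)) p φ).trans hφ)

theorem isCausalTD_diracTD : IsCausalTD diracTD :=
  fun φ hφ => image_eq_zero_of_notMem_tsupport (f := φ) fun h => lt_irrefl (0 : ℝ) (hφ h)

theorem IsCausalTD.eq_zero_of_odo_eq_zero {p : ℝ[X]} (hp : p ≠ 0) {T : TD} (hT : IsCausalTD T)
    (h : odo p T = 0) : T = 0 := by
  ext φ
  obtain ⟨ξ, χ, hχ, hξ⟩ := exists_eq_aeval_derivCLM_add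
    ((Polynomial.map_ne_zero_iff (algebraMap ℝ ℂ).injective).2 hp)
    (postcompCLM Complex.ofRealCLM φ)
  have hφ : φ = aeval (-derivCLM ℝ ℝ) p (postcompCLM Complex.reCLM ξ) +
      postcompCLM Complex.reCLM χ := by
    rw [← postcompCLM_reCLM_aeval, ← map_add, ← hξ]
    ext t
    simp
  rw [zero_apply, hφ, map_add, ← ContinuousLinearMap.comp_apply, ← odo_eq_comp_aeval, h,
    hT _ ((tsupport_comp_subset (map_zero Complex.reCLM) χ).trans hχ), zero_apply, add_zero]

theorem IsCausalTD.eq_of_odo_eq {p : ℝ[X]} (hp : p ≠ 0) {T S : TD} (hT : IsCausalTD T)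
    (hS : IsCausalTD S) (h : odo p T = odo p S) : T = S :=
  sub_eq_zero.1 <| (causalTD.sub_mem hT hS).eq_zero_of_odo_eq_zero hp (by rw [map_sub, h, sub_self])

def revTDₗ : Module.End ℝ TD where
  toFun := revTD
  map_add' _ _ := ContinuousLinearMap.add_comp _ _ _
  map_smul' _ _ := ContinuousLinearMap.smul_comp _ _ _

theorem Dop_revTD (T : TD) : Dop (revTD T) = -revTD (Dop T) := by
  ext φ
  simp [Dop_apply, revTD, derivCLM_compCLMOfContinuousLinearEquiv_neg]

theorem odo_comp_neg_X_revTD (p : ℝ[X]) (T : TD) :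
    odo (p.comp (-X)) (revTD T) = revTD (odo p T) := by
  have h : (-Dop) ∘ₗ revTDₗ = revTDₗ ∘ₗ Dop := by
    ext T : 1
    show -Dop (revTD T) = revTD (Dop T)
    rw [Dop_revTD, neg_neg]
  rw [odo, aeval_comp, map_neg, aeval_X]
  exact LinearMap.congr_fun (LinearMap.aeval_comp_eq_comp_aeval h p) T

theorem revTD_diracTD : revTD diracTD = diracTD := by
  ext φ
  simp [revTD, diracTD]

theorem IsCausalTD.isAntiCausalTD_revTD {T : TD} (hT : IsCausalTD T) :
    IsAntiCausalTD (revTD T) := by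
  intro φ hφ
  refine hT (compCLMOfContinuousLinearEquiv ℝ (.neg ℝ) φ) ?_
  rw [compCLMOfContinuousLinearEquiv_apply,
    show ⇑φ ∘ ⇑(ContinuousLinearEquiv.neg ℝ) = ⇑φ ∘ Homeomorph.neg ℝ from rfl,
    tsupport_comp_eq_preimage]
  intro t ht
  simpa using hφ ht

section Matrix

variable {D : ℕ}

theorem isCausalTD_mdoMat (A : Matrix (Fin D) (Fin D) ℝ[X]) {G : Matrix (Fin D) (Fin D) TD}
    (hG : ∀ r c, IsCausalTD (G r c)) (r c : Fin D) : IsCausalTD (mdoMat A G r c) :=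
  show ∑ d, odo (A r d) (G d c) ∈ causalTD from
    causalTD.sum_mem fun d _ => isCausalTD_odo _ (hG d c)

theorem mdoMat_mul (A B : Matrix (Fin D) (Fin D) ℝ[X]) (G : Matrix (Fin D) (Fin D) TD) :
    mdoMat (A * B) G = mdoMat A (mdoMat B G) := by
  ext r c : 1
  simp only [mdoMat, Matrix.of_apply, Matrix.mul_apply, odo, map_sum, map_mul,
    LinearMap.sum_apply, Module.End.mul_apply]
  exact Finset.sum_comm

theorem mdoMat_idDelta (A : Matrix (Fin D) (Fin D) ℝ[X]) :
    mdoMat A (idDelta D) = A.map (odo · diracTD) := by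
  ext r c : 1
  simp [mdoMat, idDelta, apply_ite]

theorem mdoMat_smul_one (p : ℝ[X]) (G : Matrix (Fin D) (Fin D) TD) :
    mdoMat (p • 1) G = G.map (odo p) := by
  ext r c : 1
  simp [mdoMat, Matrix.one_apply, apply_ite, ite_apply, odo]

theorem mdoMat_map_odo (A : Matrix (Fin D) (Fin D) ℝ[X]) (p : ℝ[X])
    (G : Matrix (Fin D) (Fin D) TD) : mdoMat A (G.map (odo p)) = (mdoMat A G).map (odo p) := by
  ext r c : 1
  simp only [mdoMat, Matrix.of_apply, Matrix.map_apply, map_sum, ← Module.End.mul_apply,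
    ← odo_mul, mul_comm]

theorem mdoMat_map_comp_neg_X_map_revTD (A : Matrix (Fin D) (Fin D) ℝ[X])
    (G : Matrix (Fin D) (Fin D) TD) :
    mdoMat (A.map (·.comp (-X))) (G.map revTD) = (mdoMat A G).map revTD := by
  ext r c : 1
  simp only [mdoMat, Matrix.of_apply, Matrix.map_apply, odo_comp_neg_X_revTD]
  exact (map_sum revTDₗ _ _).symm

theorem idDelta_map_revTD : (idDelta D).map revTD = idDelta D := by
  ext r c : 1
  simp only [idDelta, Matrix.map_apply, Matrix.of_apply]
  split_ifs
  exacts [revTD_diracTD, map_zero revTDₗ]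

theorem mdoMat_transpose_eq_idDelta {L : Matrix (Fin D) (Fin D) ℝ[X]} (hdet : L.det ≠ 0)
    {G : Matrix (Fin D) (Fin D) TD} (hcausal : ∀ r c, IsCausalTD (G r c))
    (hG : mdoMat L G = idDelta D) : mdoMat Lᵀ Gᵀ = idDelta D := by
  have hGdet : G.map (odo L.det) = L.adjugate.map (odo · diracTD) := by
    rw [← mdoMat_smul_one, ← Matrix.adjugate_mul, mdoMat_mul, hG, mdoMat_idDelta]
  have hdet_map : (mdoMat Lᵀ Gᵀ).map (odo L.det) = (idDelta D).map (odo L.det) :=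
    calc (mdoMat Lᵀ Gᵀ).map (odo L.det) = mdoMat Lᵀ (Gᵀ.map (odo L.det)) :=
          (mdoMat_map_odo _ _ _).symm
      _ = mdoMat Lᵀ (mdoMat L.adjugateᵀ (idDelta D)) := by
          rw [Matrix.transpose_map, hGdet, ← Matrix.transpose_map, mdoMat_idDelta]
      _ = mdoMat (L.adjugate * L)ᵀ (idDelta D) := by rw [← mdoMat_mul, Matrix.transpose_mul]
      _ = (idDelta D).map (odo L.det) := by
          rw [Matrix.adjugate_mul, Matrix.transpose_smul, Matrix.transpose_one, mdoMat_smul_one]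
  ext r c : 1
  refine IsCausalTD.eq_of_odo_eq hdet ?_ ?_ (congrFun (congrFun hdet_map r) c)
  · exact isCausalTD_mdoMat Lᵀ (fun r c => hcausal c r) r c
  · simp only [idDelta, Matrix.of_apply]
    split_ifs
    exacts [isCausalTD_diracTD, causalTD.zero_mem]

end Matrix

/-- If `G_L` is the causal Green's matrix of an invertible MDO `L`, then its
time-reversed transpose `G_L^{⊤,∨}` is an anti-causal Green's matrix of the
adjoint operator `L*`. -/
theorem adjoint_greens_matrix (D : ℕ) (L : Matrix (Fin D) (Fin D) (Polynomial ℝ))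
    (hdet : L.det ≠ 0)
    (G : Matrix (Fin D) (Fin D) TD)
    (hcausal : ∀ r c, IsCausalTD (G r c))
    (hG : mdoMat L G = idDelta D) :
    mdoMat (mdoAdj L) (revTranspose G) = idDelta D ∧
    ∀ r c, IsAntiCausalTD (revTranspose G r c) := by
  refine ⟨?_, fun r c => (hcausal c r).isAntiCausalTD_revTD⟩
  calc mdoMat (mdoAdj L) (revTranspose G) = (mdoMat Lᵀ Gᵀ).map revTD :=
        mdoMat_map_comp_neg_X_map_revTD Lᵀ Gᵀ
    _ = idDelta D := by rw [mdoMat_transpose_eq_idDelta hdet hcausal hG, idDelta_map_revTD]
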